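/- arXiv:1805.07855 — 3 statements merged into one kernel-verified Lean document; each statement's English description precedes it below -/
import Mathlib

section
/- For the Tribonacci sequence and any k ≥ 3: 8·∑_{j=0}^{k} (−1)^j·T(2j)² = (−1)^k·(7·T(2k)² + 3·T(2k−1)² − 6·T(2k−2)² − T(2k−4)² + T(2k−5)²) + 2. -/
/-!
Writing `Q(n)` (`tribSqForm`) for the bracket on the right with `T (2k)` at index `n + 5`, the Tribonacci
recurrence gives the polynomial identity `Q(n + 2) + Q(n) = 8 T(n + 7)²`; with alternating signs
the sum therefore telescopes, and the constant `2` is fixed by the case `k = 3`.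
-/

open Finset

section Tribonacci

variable {R : Type*} [CommRing R]

theorem sum_range_alternating_eq_of_add_succ {a b : ℕ → R} {c : R} {k₀ : ℕ}
    (hbase : ∑ j ∈ range (k₀ + 1), (-1) ^ j * b j = (-1) ^ k₀ * a k₀ + c)
    (hstep : ∀ k, k₀ ≤ k → a (k + 1) + a k = b (k + 1)) :
    ∀ k, k₀ ≤ k → ∑ j ∈ range (k + 1), (-1) ^ j * b j = (-1) ^ k * a k + c := by
  intro k hk
  induction k, hk using Nat.le_induction with
  | base => exact hbase
  | succ k hk ih =>
    rw [sum_range_succ, ih, ← hstep k hk, pow_succ]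
    ring

def tribSqForm (t : ℕ → R) (n : ℕ) : R :=
  7 * t (n + 5) ^ 2 + 3 * t (n + 4) ^ 2 - 6 * t (n + 3) ^ 2 - t (n + 1) ^ 2 + t n ^ 2

theorem tribSqForm_add_two_add_tribSqForm {t : ℕ → R}
    (ht : ∀ n, t (n + 3) = t (n + 2) + t (n + 1) + t n) (n : ℕ) :
    tribSqForm t (n + 2) + tribSqForm t n = 8 * t (n + 7) ^ 2 := by
  simp only [tribSqForm, ht (n + 4), ht (n + 3), ht (n + 2), ht (n + 1), ht n]
  ring

end Tribonacci

theorem stmt14 (T : ℕ → ℤ) (h0 : T 0 = 0) (h1 : T 1 = 1) (h2 : T 2 = 1) (hT : ∀ n, 3 ≤ n → T n = T (n-1) + T (n-2) + T (n-3)) :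
    ∀ k, 3 ≤ k → 8*∑ j ∈ range (k+1), (-1:ℤ)^j * (T (2*j))^2 = (-1)^k * (7*(T (2*k))^2 + 3*(T (2*k-1))^2 - 6*(T (2*k-2))^2 - (T (2*k-4))^2 + (T (2*k-5))^2) + 2 := by
  have ht : ∀ n, T (n + 3) = T (n + 2) + T (n + 1) + T n := fun n => hT (n + 3) (by omega)
  have hform : ∀ k, 3 ≤ k → 7*(T (2*k))^2 + 3*(T (2*k-1))^2 - 6*(T (2*k-2))^2 - (T (2*k-4))^2
      + (T (2*k-5))^2 = tribSqForm T (2*k-5) := by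
    intro k hk
    obtain ⟨n, rfl⟩ : ∃ n, k = n + 3 := ⟨k - 3, by omega⟩
    rw [show 2*(n+3) = 2*n+1+5 by ring]
    simp only [tribSqForm, Nat.add_sub_cancel, show 2*n+1+5-1 = 2*n+1+4 by omega,
      show 2*n+1+5-2 = 2*n+1+3 by omega, show 2*n+1+5-4 = 2*n+1+1 by omega]
  have hsum := sum_range_alternating_eq_of_add_succ (a := fun k => tribSqForm T (2*k-5))
    (b := fun j => 8 * T (2*j) ^ 2) (c := 2) (k₀ := 3)
    (by norm_num [sum_range_succ, tribSqForm, ht, h0, h1, h2])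
    (fun k hk => by
      rw [show 2*(k+1)-5 = 2*k-5+2 by omega, show 2*(k+1) = 2*k-5+7 by omega]
      exact tribSqForm_add_two_add_tribSqForm ht _)
  intro k hk
  rw [hform k hk, mul_sum, ← hsum k hk]
  simp only [mul_left_comm]
end

section
/- For the Tribonacci sequence and any k ≥ 2: 16·∑_{j=1}^{k} T(4j−2)² = T(4k)² − 2·T(4k−1)² + 12·T(4k−2)² − 2·T(4k−3)² + T(4k−4)² − 2·T(4k−5)² − 2. -/
/-!
Write `Q n` for the quadratic form on the right-hand side, evaluated on the window
`u n, …, u (n+5)` (so the theorem concerns `Q (4k-5)`). For any sequence obeying the Tribonacci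
recurrence, `Q (n+4) - Q n = 16 u (n+7)²`, a polynomial identity once every term is expressed
through `u n, u (n+1), u (n+2)`. Hence the sum telescopes, and the case `k = 2` is a computation
with `T 2, …, T 8`.
-/

open Finset

section

variable {R : Type*} [CommRing R] {u : ℕ → R}

def tribQuad (u : ℕ → R) (n : ℕ) : R :=
  u (n+5)^2 - 2*u (n+4)^2 + 12*u (n+3)^2 - 2*u (n+2)^2 + u (n+1)^2 - 2*u n^2

theorem tribQuad_add_four (hu : ∀ n, u (n+3) = u (n+2) + u (n+1) + u n) (n : ℕ) :
    tribQuad u (n+4) = tribQuad u n + 16 * u (n+7)^2 := by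
  simp only [tribQuad, add_assoc, Nat.reduceAdd, hu]
  ring

theorem sixteen_mul_sum_sq_tribonacci (h0 : u 0 = 0) (h1 : u 1 = 1) (h2 : u 2 = 1)
    (hu : ∀ n, u (n+3) = u (n+2) + u (n+1) + u n) (k : ℕ) (hk : 2 ≤ k) :
    16 * ∑ j ∈ Icc 1 k, u (4*j-2)^2 = tribQuad u (4*k-5) - 2 := by
  induction k, hk using Nat.le_induction with
  | base =>
    have h3 : u 3 = 2 := by rw [hu 0, h0, h1, h2]; norm_num
    have h4 : u 4 = 4 := by rw [hu 1, h1, h2, h3]; norm_num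
    have h5 : u 5 = 7 := by rw [hu 2, h2, h3, h4]; norm_num
    have h6 : u 6 = 13 := by rw [hu 3, h3, h4, h5]; norm_num
    have h7 : u 7 = 24 := by rw [hu 4, h4, h5, h6]; norm_num
    have h8 : u 8 = 44 := by rw [hu 5, h5, h6, h7]; norm_num
    rw [show Icc 1 2 = {1, 2} by rfl, sum_pair (by norm_num), tribQuad]
    norm_num [h2, h3, h4, h5, h6, h7, h8]
  | succ k hk ih =>
    rw [sum_Icc_succ_top (by omega), mul_add, ih, show 4*(k+1)-5 = (4*k-5)+4 by omega,
      tribQuad_add_four hu, show 4*(k+1)-2 = (4*k-5)+7 by omega]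
    ring

end

theorem stmt17 (T : ℕ → ℤ) (h0 : T 0 = 0) (h1 : T 1 = 1) (h2 : T 2 = 1) (hT : ∀ n, 3 ≤ n → T n = T (n-1) + T (n-2) + T (n-3)) :
    ∀ k, 2 ≤ k → 16*∑ j ∈ Icc 1 k, (T (4*j-2))^2 = (T (4*k))^2 - 2*(T (4*k-1))^2 + 12*(T (4*k-2))^2 - 2*(T (4*k-3))^2 + (T (4*k-4))^2 - 2*(T (4*k-5))^2 - 2 := by
  intro k hk
  have hu : ∀ n, T (n+3) = T (n+2) + T (n+1) + T n := fun n => by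
    simpa using hT (n+3) (by omega)
  rw [sixteen_mul_sum_sq_tribonacci h0 h1 h2 hu k hk, tribQuad]
  obtain ⟨m, rfl⟩ : ∃ m, k = m + 2 := ⟨k - 2, by omega⟩
  rw [show 4*(m+2) - 5 = 4*m + 3 by omega, show 4*(m+2) = 4*m + 8 by ring]
  simp only [add_assoc, Nat.reduceAdd, Nat.reduceSubDiff]
end

section
/- For the Tribonacci sequence and any k ≥ 5: 8·∑_{j=0}^{k} j·T(j)² = (9k−2)·T(k)² + 7(k−1)·T(k−1)² + 4(k−2)·T(k−2)² − 2k·T(k−3)² − k·T(k−4)² − (k−1)·T(k−5)² + 4. -/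
/-!
The squares of a Tribonacci-type sequence satisfy a linear recurrence of order six, whose
characteristic roots are the pairwise products of the roots of `x³ - x² - x - 1`. With it, the
right-hand side `F k` of the identity (without the `+ 4`) satisfies `F (k + 1) - F k = 8 (k + 1) T(k + 1)²`,
so `8 ∑_{j ≤ k} j T(j)² - F k` is constant, and its value at `k = 5` is `4`.
-/

open Finset

section

variable {R : Type*} [CommRing R] {u : ℕ → R}

theorem sq_add_six_of_tribonacci (hu : ∀ n, u (n + 3) = u (n + 2) + u (n + 1) + u n) (n : ℕ) :
    u (n + 6) ^ 2 =
      2 * u (n + 5) ^ 2 + 3 * u (n + 4) ^ 2 + 6 * u (n + 3) ^ 2 - u (n + 2) ^ 2 - u n ^ 2 := by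
  have h3 : u (n + 3) = u (n + 2) + u (n + 1) + u n := hu n
  have h4 : u (n + 4) = u (n + 3) + u (n + 2) + u (n + 1) := hu (n + 1)
  have h5 : u (n + 5) = u (n + 4) + u (n + 3) + u (n + 2) := hu (n + 2)
  have h6 : u (n + 6) = u (n + 5) + u (n + 4) + u (n + 3) := hu (n + 3)
  rw [h6, h5, h4, h3]
  ring

variable (u) in
/-- The right-hand side of the identity without the `+ 4`, indexed by `m = k - 5` so that no
truncated subtraction occurs. -/
def weightedSqClosedForm (m : ℕ) : R :=
  (9 * (m + 5) - 2) * u (m + 5) ^ 2 + 7 * (m + 4) * u (m + 4) ^ 2 + 4 * (m + 3) * u (m + 3) ^ 2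
    - 2 * (m + 5) * u (m + 2) ^ 2 - (m + 5) * u (m + 1) ^ 2 - (m + 4) * u m ^ 2

theorem weightedSqClosedForm_succ_sub (hu : ∀ n, u (n + 3) = u (n + 2) + u (n + 1) + u n)
    (m : ℕ) :
    weightedSqClosedForm u (m + 1) - weightedSqClosedForm u m = 8 * (m + 6) * u (m + 6) ^ 2 := by
  simp only [weightedSqClosedForm, add_assoc, Nat.reduceAdd]
  push_cast
  linear_combination ((m : R) + 4) * sq_add_six_of_tribonacci hu m

theorem sum_weightedSq_sub_closedForm (hu : ∀ n, u (n + 3) = u (n + 2) + u (n + 1) + u n)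
    (m : ℕ) :
    8 * ∑ j ∈ range (m + 6), (j : R) * u j ^ 2 - weightedSqClosedForm u m =
      8 * ∑ j ∈ range 6, (j : R) * u j ^ 2 - weightedSqClosedForm u 0 := by
  induction m with
  | zero => rfl
  | succ m ih =>
    rw [← ih, sum_range_succ]
    push_cast
    linear_combination -weightedSqClosedForm_succ_sub hu m

end

theorem stmt18 (T : ℕ → ℤ) (h0 : T 0 = 0) (h1 : T 1 = 1) (h2 : T 2 = 1) (hT : ∀ n, 3 ≤ n → T n = T (n-1) + T (n-2) + T (n-3)) :
    ∀ k, 5 ≤ k → 8*∑ j ∈ range (k+1), (j:ℤ)*(T j)^2 = (9*(k:ℤ)-2)*(T k)^2 + 7*((k:ℤ)-1)*(T (k-1))^2 + 4*((k:ℤ)-2)*(T (k-2))^2 - 2*(k:ℤ)*(T (k-3))^2 - (k:ℤ)*(T (k-4))^2 - ((k:ℤ)-1)*(T (k-5))^2 + 4 := by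
  have hu : ∀ n, T (n + 3) = T (n + 2) + T (n + 1) + T n := fun n => hT (n + 3) (by omega)
  have h3 : T 3 = 2 := by rw [hu 0, h0, h1, h2]; rfl
  have h4 : T 4 = 4 := by rw [hu 1, h1, h2, h3]; rfl
  have h5 : T 5 = 7 := by rw [hu 2, h2, h3, h4]; rfl
  have initial : 8 * ∑ j ∈ range 6, (j : ℤ) * T j ^ 2 - weightedSqClosedForm T 0 = 4 := by
    simp [sum_range_succ, weightedSqClosedForm, h0, h1, h2, h3, h4, h5]
  intro k hk
  obtain ⟨m, rfl⟩ : ∃ m, k = m + 5 := ⟨k - 5, by omega⟩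
  have hsum := sum_weightedSq_sub_closedForm hu m
  rw [initial, sub_eq_iff_eq_add'] at hsum
  rw [hsum, weightedSqClosedForm]
  simp only [Nat.add_sub_cancel, show m + 5 - 1 = m + 4 by omega, show m + 5 - 2 = m + 3 by omega,
    show m + 5 - 3 = m + 2 by omega, show m + 5 - 4 = m + 1 by omega]
  push_cast
  ring
end
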